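/- arXiv:2601.15446 — 2 statements merged into one kernel-verified Lean document; each statement's English description precedes it below -/
import Mathlib

section
/- Lemma: Let C_X, C_Z ⊆ 𝔽₂ⁿ be a CSS code with a set of checks of check weight at most 4 such that every qubit is contained in exactly two X checks and exactly two Z checks, every nontrivial logical operator has Hamming weight at least 3 (distance d > 2), and no two distinct qubits i, j satisfy e_i + e_j ∈ C_X^⊥ ∩ C_Z^⊥ (no disentangled pair of qubits). Then for every X check x and every Z check z, the size of supp x ∩ supp z is 0 or 2. -/
/-- Dot product of two vectors over `ZMod 2` (the standard bilinear form). -/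
def dotp {i : Type*} [Fintype i] (x y : i → ZMod 2) : ZMod 2 := ∑ j, x j * y j

/-- The dual code: the orthogonal complement of `C` with respect to the
standard bilinear form `dotp`. -/
def dualCode {i : Type*} [Fintype i] (C : Submodule (ZMod 2) (i → ZMod 2)) :
    Submodule (ZMod 2) (i → ZMod 2) where
  carrier := {u | ∀ v ∈ C, dotp u v = 0}
  add_mem' := by
    intro a b ha hb v hv
    have h1 := ha v hv
    have h2 := hb v hv
    simp only [dotp, Pi.add_apply, add_mul, Finset.sum_add_distrib] at h1 h2 ⊢
    rw [h1, h2, add_zero]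
  zero_mem' := by
    intro v hv
    simp [dotp]
  smul_mem' := by
    intro c a ha v hv
    have h1 := ha v hv
    simp only [dotp] at h1
    simp only [dotp, Pi.smul_apply, smul_eq_mul, mul_assoc, ← Finset.mul_sum]
    rw [h1, mul_zero]

/-- The support of a binary vector, as a `Finset`. -/
def suppF {n : ℕ} (s : Fin n → ZMod 2) : Finset (Fin n) :=
  Finset.univ.filter fun i => s i ≠ 0

lemma zmod2_cases : ∀ a : ZMod 2, a = 0 ∨ a = 1 := by decide
lemma zmod2_eq {a b : ZMod 2} (h : a ≠ 0 ↔ b ≠ 0) : a = b := by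
  revert h; revert a b; decide
lemma dotp_comm {n : Type*} [Fintype n] (u w : n → ZMod 2) : dotp u w = dotp w u := by
  simp [dotp, mul_comm]
def stdBilin (n : ℕ) : LinearMap.BilinForm (ZMod 2) (Fin n → ZMod 2) :=
  LinearMap.mk₂ (ZMod 2) dotp
    (fun x y z => by simp [dotp, add_mul, Finset.sum_add_distrib])
    (fun c x y => by simp [dotp, Finset.mul_sum, mul_assoc])
    (fun x y z => by simp [dotp, mul_add, Finset.sum_add_distrib])
    (fun c x y => by simp [dotp, Finset.mul_sum]; ring_nf; simp [mul_assoc, mul_comm, mul_left_comm])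
lemma stdBilin_apply {n : ℕ} (x y : Fin n → ZMod 2) : stdBilin n x y = dotp x y := rfl
lemma stdBilin_nondeg (n : ℕ) : (stdBilin n).Nondegenerate := by
  refine ⟨fun m h => ?_, fun m h' => ?_⟩
  · funext i
    have := h (Pi.single i 1)
    simp only [stdBilin_apply, dotp, Pi.single_apply, mul_ite, mul_one, mul_zero,
      Finset.sum_ite_eq', Finset.mem_univ, if_true] at this
    simpa using this
  · have h : ∀ y, stdBilin n m y = 0 := fun y => by
      rw [stdBilin_apply, dotp_comm, ← stdBilin_apply]; exact h' y
    funext i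
    have := h (Pi.single i 1)
    simp only [stdBilin_apply, dotp, Pi.single_apply, mul_ite, mul_one, mul_zero,
      Finset.sum_ite_eq', Finset.mem_univ, if_true] at this
    simpa using this
lemma stdBilin_refl (n : ℕ) : (stdBilin n).IsRefl := by
  intro x y h
  rw [stdBilin_apply, dotp_comm, ← stdBilin_apply]
  exact h

lemma mem_dualCode {n : ℕ} {C : Submodule (ZMod 2) (Fin n → ZMod 2)} {u : Fin n → ZMod 2} :
    u ∈ dualCode C ↔ ∀ v ∈ C, dotp u v = 0 := Iff.rfl

lemma dualCode_eq_orthogonal {n : ℕ} (C : Submodule (ZMod 2) (Fin n → ZMod 2)) :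
    dualCode C = (stdBilin n).orthogonal C := by
  ext u
  rw [mem_dualCode, LinearMap.BilinForm.mem_orthogonal_iff]
  constructor
  · intro h v hv
    have := h v hv
    rw [stdBilin_apply, dotp_comm]
    exact this
  · intro h v hv
    have := h v hv
    rw [stdBilin_apply] at this
    rw [dotp_comm]
    exact this

lemma dualCode_dualCode {n : ℕ} (C : Submodule (ZMod 2) (Fin n → ZMod 2)) :
    dualCode (dualCode C) = C := by
  rw [dualCode_eq_orthogonal, dualCode_eq_orthogonal,
    LinearMap.BilinForm.orthogonal_orthogonal (stdBilin_nondeg n) (stdBilin_refl n)]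

lemma span_agree {n : ℕ} (S : Finset (Fin n → ZMod 2)) (i j : Fin n)
    (h : ∀ t ∈ S, t i = t j) :
    ∀ v ∈ Submodule.span (ZMod 2) (S : Set (Fin n → ZMod 2)), v i = v j := by
  intro v hv
  have hle : Submodule.span (ZMod 2) (S : Set (Fin n → ZMod 2)) ≤
      LinearMap.ker ((LinearMap.proj i : (Fin n → ZMod 2) →ₗ[ZMod 2] ZMod 2) - LinearMap.proj j) := by
    rw [Submodule.span_le]
    intro t ht
    simp only [SetLike.mem_coe, LinearMap.mem_ker, LinearMap.sub_apply, LinearMap.proj_apply,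
      sub_eq_zero]
    exact h t ht
  have := hle hv
  simpa [sub_eq_zero] using this

lemma dotp_eq_card {n : ℕ} (u w : Fin n → ZMod 2) :
    dotp u w = ((suppF u ∩ suppF w).card : ZMod 2) := by
  unfold dotp suppF
  rw [← Finset.filter_and]
  rw [← Finset.sum_boole]
  refine Finset.sum_congr rfl fun j _ => ?_
  rcases zmod2_cases (u j) with h1 | h1 <;> rcases zmod2_cases (w j) with h2 | h2 <;>
    simp [h1, h2]


lemma dotp_pair {n : ℕ} (a b : Fin n) (u : Fin n → ZMod 2) :
    dotp (Pi.single a 1 + Pi.single b 1) u = u a + u b := by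
  simp [dotp, Pi.single_apply, add_mul, ite_mul, one_mul, zero_mul,
    Finset.sum_add_distrib, Finset.sum_ite_eq']

lemma hn_pair {n : ℕ} {a b : Fin n} (hab : a ≠ b) :
    hammingNorm (Pi.single a 1 + Pi.single b 1 : Fin n → ZMod 2) = 2 := by
  have hset : (Finset.univ.filter fun i =>
      (Pi.single a 1 + Pi.single b 1 : Fin n → ZMod 2) i ≠ 0) = {a, b} := by
    ext j
    by_cases hja : j = a <;> by_cases hjb : j = b <;>
      simp [hja, hjb, Pi.single_apply, hab, Ne.symm hab]
  show (Finset.univ.filter fun i =>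
      (Pi.single a 1 + Pi.single b 1 : Fin n → ZMod 2) i ≠ 0).card = 2
  rw [hset, Finset.card_pair hab]

lemma pair_same_checks {n : ℕ} (S : Finset (Fin n → ZMod 2)) (y w : Fin n → ZMod 2) (a : Fin n)
    (hy : y ∈ S) (hya : y a ≠ 0) (hwa : w a ≠ 0)
    (hdeg : ∀ i : Fin n, (S.filter fun s => s i ≠ 0).card = 2)
    (hortho : ∀ t ∈ S, dotp t w = 0)
    (hsub : ∀ j, w j ≠ 0 → y j ≠ 0) :
    ∃ b, b ≠ a ∧ w b ≠ 0 ∧ ∀ u ∈ S, u a = u b := by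
  have hya' : y ∈ S.filter (fun s => s a ≠ 0) := Finset.mem_filter.mpr ⟨hy, hya⟩
  obtain ⟨t, ht, hty⟩ := Finset.exists_mem_ne
    (s := S.filter (fun s => s a ≠ 0)) (by rw [hdeg a]; norm_num) y
  have htS : t ∈ S := (Finset.mem_filter.mp ht).1
  have hta : t a ≠ 0 := (Finset.mem_filter.mp ht).2
  have hov : 2 ∣ (suppF t ∩ suppF w).card := by
    have h0 := hortho t htS
    rw [dotp_eq_card] at h0
    rw [← ZMod.natCast_eq_zero_iff]
    exact h0
  have hmem : a ∈ suppF t ∩ suppF w := by simp [suppF, hta, hwa]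
  obtain ⟨b, hb, hba⟩ := Finset.exists_mem_ne (s := suppF t ∩ suppF w)
    (by
      have h1 : 1 ≤ (suppF t ∩ suppF w).card := Finset.card_pos.mpr ⟨a, hmem⟩
      omega) a
  have htb : t b ≠ 0 := by
    have := (Finset.mem_inter.mp hb).1; simpa [suppF] using this
  have hwb : w b ≠ 0 := by
    have := (Finset.mem_inter.mp hb).2; simpa [suppF] using this
  have hyb : y b ≠ 0 := hsub b hwb
  have hpair : ∀ i : Fin n, y i ≠ 0 → t i ≠ 0 →
      S.filter (fun s => s i ≠ 0) = {y, t} := by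
    intro i hyi hti
    refine (Finset.eq_of_subset_of_card_le ?_ ?_).symm
    · intro u hu
      rcases Finset.mem_insert.mp hu with h | h
      · subst h; exact Finset.mem_filter.mpr ⟨hy, hyi⟩
      · rw [Finset.mem_singleton] at h; subst h
        exact Finset.mem_filter.mpr ⟨htS, hti⟩
    · rw [hdeg i, Finset.card_pair (Ne.symm hty)]
  have hfa := hpair a hya hta
  have hfb := hpair b hyb htb
  refine ⟨b, hba, hwb, ?_⟩
  intro u hu
  apply zmod2_eq
  constructor
  · intro h
    have h1 : u ∈ ({y, t} : Finset (Fin n → ZMod 2)) :=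
      hfa ▸ Finset.mem_filter.mpr ⟨hu, h⟩
    have h2 : u ∈ S.filter (fun s => s b ≠ 0) := hfb ▸ h1
    exact (Finset.mem_filter.mp h2).2
  · intro h
    have h1 : u ∈ ({y, t} : Finset (Fin n → ZMod 2)) :=
      hfb ▸ Finset.mem_filter.mpr ⟨hu, h⟩
    have h2 : u ∈ S.filter (fun s => s a ≠ 0) := hfa ▸ h1
    exact (Finset.mem_filter.mp h2).2

/-- **Lemma.**  Let `(CX, CZ)` be a CSS code with a set of checks of check
weight at most 4 such that every qubit is contained in exactly two X checks
and exactly two Z checks, every nontrivial logical operator has Hamming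
weight at least 3 (distance `d > 2`), and no two distinct qubits `i, j` are
disentangled (`e_i + e_j ∈ CX^⊥ ∩ CZ^⊥`).  Then for every X check `x` and
every Z check `z`, the size of `supp x ∩ supp z` is 0 or 2. -/
theorem css_weight_four_overlap_zero_or_two (n : ℕ)
    (CX CZ : Submodule (ZMod 2) (Fin n → ZMod 2))
    (hCSS : dualCode CX ≤ CZ)
    (SX SZ : Finset (Fin n → ZMod 2))
    (hSX : Submodule.span (ZMod 2) (↑SX : Set (Fin n → ZMod 2)) = dualCode CX)
    (hSZ : Submodule.span (ZMod 2) (↑SZ : Set (Fin n → ZMod 2)) = dualCode CZ)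
    (hwX : ∀ s ∈ SX, hammingNorm s ≤ 4)
    (hwZ : ∀ s ∈ SZ, hammingNorm s ≤ 4)
    (hdegX : ∀ i : Fin n, (SX.filter fun s => s i ≠ 0).card = 2)
    (hdegZ : ∀ i : Fin n, (SZ.filter fun s => s i ≠ 0).card = 2)
    (hdist : ∀ v : Fin n → ZMod 2,
      ((v ∈ CZ ∧ v ∉ dualCode CX) ∨ (v ∈ CX ∧ v ∉ dualCode CZ)) →
        3 ≤ hammingNorm v)
    (hnodis : ¬∃ i j : Fin n, i ≠ j ∧
      (Pi.single i 1 + Pi.single j 1 : Fin n → ZMod 2) ∈ dualCode CX ∧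
      (Pi.single i 1 + Pi.single j 1 : Fin n → ZMod 2) ∈ dualCode CZ) :
    ∀ x ∈ SX, ∀ z ∈ SZ,
      (suppF x ∩ suppF z).card = 0 ∨ (suppF x ∩ suppF z).card = 2 := by
  intro x hx z hz
  have hx' : x ∈ dualCode CX := by rw [← hSX]; exact Submodule.subset_span hx
  have hz' : z ∈ dualCode CZ := by rw [← hSZ]; exact Submodule.subset_span hz
  have hxCZ : x ∈ CZ := hCSS hx'
  have hxcard : (suppF x).card ≤ 4 := hwX x hx
  have hzcard : (suppF z).card ≤ 4 := hwZ z hz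
  have heven : 2 ∣ (suppF x ∩ suppF z).card := by
    have h0 : dotp z x = 0 := hz' x hxCZ
    rw [dotp_eq_card] at h0
    rw [← ZMod.natCast_eq_zero_iff, Finset.inter_comm]
    exact h0
  have hcard_le : (suppF x ∩ suppF z).card ≤ 4 :=
    le_trans (Finset.card_le_card Finset.inter_subset_left) hxcard
  have h024 : (suppF x ∩ suppF z).card = 0 ∨ (suppF x ∩ suppF z).card = 2 ∨
      (suppF x ∩ suppF z).card = 4 := by omega
  rcases h024 with h | h | h
  · exact Or.inl h
  · exact Or.inr h
  exfalso
  have hsuppx : suppF x ∩ suppF z = suppF x :=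
    Finset.eq_of_subset_of_card_le Finset.inter_subset_left (by omega)
  have hsuppz : suppF x ∩ suppF z = suppF z :=
    Finset.eq_of_subset_of_card_le Finset.inter_subset_right (by omega)
  have hsupp : suppF x = suppF z := hsuppx.symm.trans hsuppz
  obtain ⟨a, ha⟩ : (suppF x ∩ suppF z).Nonempty := Finset.card_pos.mp (by omega)
  have hax : x a ≠ 0 := by
    have := (Finset.mem_inter.mp ha).1; simpa [suppF] using this
  have haz : z a ≠ 0 := by
    have := (Finset.mem_inter.mp ha).2; simpa [suppF] using this
  have hsubzx : ∀ j, z j ≠ 0 → x j ≠ 0 := by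
    intro j hj
    have : j ∈ suppF x := hsupp ▸ (by simp [suppF, hj] : j ∈ suppF z)
    simpa [suppF] using this
  have hsubxz : ∀ j, x j ≠ 0 → z j ≠ 0 := by
    intro j hj
    have : j ∈ suppF z := hsupp ▸ (by simp [suppF, hj] : j ∈ suppF x)
    simpa [suppF] using this
  -- X side pair
  obtain ⟨b, hba, hzb, hXab⟩ := pair_same_checks SX x z a hx hax haz hdegX
    (fun t ht => by
      have htd : t ∈ dualCode CX := by rw [← hSX]; exact Submodule.subset_span ht
      have : t ∈ CZ := hCSS htd
      rw [dotp_comm]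
      exact hz' t this)
    hsubzx
  -- Z side pair
  obtain ⟨c, hca, hxc, hZac⟩ := pair_same_checks SZ z x a hz haz hax hdegZ
    (fun t ht => by
      have htd : t ∈ dualCode CZ := by rw [← hSZ]; exact Submodule.subset_span ht
      exact htd x hxCZ)
    hsubxz
  have hab : a ≠ b := Ne.symm hba
  set v : Fin n → ZMod 2 := Pi.single a 1 + Pi.single b 1 with hv
  have hvCX : v ∈ CX := by
    rw [← dualCode_dualCode CX, mem_dualCode]
    intro u hu
    rw [← hSX] at hu
    rw [hv, dotp_pair, span_agree SX a b hXab u hu]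
    exact CharTwo.add_self_eq_zero _
  have hv2 : hammingNorm v = 2 := hn_pair hab
  by_cases hcb : c = b
  · have hZab : ∀ u ∈ SZ, u a = u b := hcb ▸ hZac
    have hvCZ : v ∈ CZ := by
      rw [← dualCode_dualCode CZ, mem_dualCode]
      intro u hu
      rw [← hSZ] at hu
      rw [hv, dotp_pair, span_agree SZ a b hZab u hu]
      exact CharTwo.add_self_eq_zero _
    by_cases h1 : v ∈ dualCode CX
    · by_cases h2 : v ∈ dualCode CZ
      · exact hnodis ⟨a, b, hab, h1, h2⟩
      · have h3 := hdist v (Or.inr ⟨hvCX, h2⟩); omega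
    · have h3 := hdist v (Or.inl ⟨hvCZ, h1⟩); omega
  · have hvnd : v ∉ dualCode CZ := by
      intro hmem
      rw [← hSZ] at hmem
      have hagree := span_agree SZ a c hZac v hmem
      have hva : v a = 1 := by simp [hv, Pi.single_apply, hab]
      have hvc : v c = 0 := by simp [hv, Pi.single_apply, hca, hcb]
      rw [hva, hvc] at hagree
      exact one_ne_zero hagree
    have h3 := hdist v (Or.inr ⟨hvCX, hvnd⟩); omega
end

section
/- Proposition (removing a disentangled subsystem): Let S ⊆ 𝔽₂ⁿ × 𝔽₂ⁿ be a stabilizer code with n − dim S = k > 0, and let A be a disentangled subset of m qubits. Let π denote the coordinatewise restriction of pairs (a,b) to the n − m qubits outside A. Then π(S) is an isotropic subspace of 𝔽₂^{n−m} × 𝔽₂^{n−m} of dimension dim S − m, so the restricted code has the same number of logical qubits k = (n − m) − dim π(S), and it has the same distance: the minimum weight of an element of π(S)^⊥ω ∖ π(S) equals the minimum weight of an element of S^⊥ω ∖ S. -/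
/-- The weight of a Pauli operator, identified (modulo phase) with a pair
`(a, b)` of binary vectors (X-part and Z-part): the number of qubits on which
it acts nontrivially. -/
def pairWt {i : Type*} [Fintype i] [DecidableEq i]
    (v : (i → ZMod 2) × (i → ZMod 2)) : ℕ :=
  (Finset.univ.filter fun j => ¬(v.1 j = 0 ∧ v.2 j = 0)).card

/-- The symplectic form `ω((a,b),(a',b')) = a·b' + a'·b` on pairs of binary
vectors, detecting (anti)commutation of Pauli operators. -/
def symp {i : Type*} [Fintype i]
    (v w : (i → ZMod 2) × (i → ZMod 2)) : ZMod 2 :=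
  dotp v.1 w.2 + dotp w.1 v.2

/-- The symplectic dual `S^⊥ω` of a subspace of Pauli operators: all pairs
commuting with every element of `S`. -/
def sympDual {i : Type*} [Fintype i]
    (S : Submodule (ZMod 2) ((i → ZMod 2) × (i → ZMod 2))) :
    Set ((i → ZMod 2) × (i → ZMod 2)) :=
  {v | ∀ s ∈ S, symp v s = 0}

open Module

section Aux

variable {ι : Type*} [Fintype ι]

lemma dotp_add_left (x y z : ι → ZMod 2) : dotp (x + y) z = dotp x z + dotp y z := by
  simp [dotp, add_mul, Finset.sum_add_distrib]

lemma dotp_add_right (x y z : ι → ZMod 2) : dotp x (y + z) = dotp x y + dotp x z := by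
  simp [dotp, mul_add, Finset.sum_add_distrib]

lemma dotp_smul_left (c : ZMod 2) (x z : ι → ZMod 2) : dotp (c • x) z = c * dotp x z := by
  simp [dotp, Finset.mul_sum, mul_assoc]

lemma dotp_smul_right (c : ZMod 2) (x z : ι → ZMod 2) : dotp x (c • z) = c * dotp x z := by
  simp [dotp, Finset.mul_sum]; ring_nf
  exact Finset.sum_congr rfl fun j _ => by ring

lemma symp_comm (v w : (ι → ZMod 2) × (ι → ZMod 2)) : symp v w = symp w v := by
  simp [symp, add_comm]

@[simp] lemma dotp_zero_left (x : ι → ZMod 2) : dotp 0 x = 0 := by simp [dotp]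
@[simp] lemma dotp_zero_right (x : ι → ZMod 2) : dotp x 0 = 0 := by simp [dotp]

@[simp] lemma symp_zero_left (x : (ι → ZMod 2) × (ι → ZMod 2)) : symp 0 x = 0 := by
  simp [symp]

@[simp] lemma symp_zero_right (x : (ι → ZMod 2) × (ι → ZMod 2)) : symp x 0 = 0 := by
  simp [symp]

/-- The symplectic form as a bilinear form. -/
def sympForm (ι : Type*) [Fintype ι] :
    LinearMap.BilinForm (ZMod 2) ((ι → ZMod 2) × (ι → ZMod 2)) :=
  LinearMap.mk₂ (ZMod 2) symp
    (fun v v' w => by simp [symp, Prod.fst_add, dotp_add_left, dotp_add_right]; ring)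
    (fun c v w => by simp [symp, dotp_smul_left, dotp_smul_right]; ring)
    (fun v w w' => by simp [symp, dotp_add_left, dotp_add_right]; ring)
    (fun c v w => by simp [symp, dotp_smul_left, dotp_smul_right]; ring)

@[simp] lemma sympForm_apply (v w : (ι → ZMod 2) × (ι → ZMod 2)) :
    sympForm ι v w = symp v w := rfl

lemma dotp_single [DecidableEq ι] (x : ι → ZMod 2) (j : ι) :
    dotp x (Pi.single j 1) = x j := by
  simp [dotp, Pi.single_apply, mul_ite]

lemma dotp_single_left [DecidableEq ι] (x : ι → ZMod 2) (j : ι) :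
    dotp (Pi.single j 1) x = x j := by
  simp [dotp, Pi.single_apply, ite_mul]

lemma sympForm_nondegenerate : (sympForm ι).Nondegenerate := by
  classical
  suffices hL : ∀ v, (∀ w, sympForm ι v w = 0) → v = 0 from
    ⟨hL, fun w hw => hL w fun v => by rw [sympForm_apply, symp_comm]; exact hw v⟩
  intro v hv
  have h1 : v.1 = 0 := by
    funext j
    have := hv (0, Pi.single j 1)
    simpa [symp, dotp_single] using this
  have h2 : v.2 = 0 := by
    funext j
    have := hv (Pi.single j 1, 0)
    simpa [symp, dotp_single_left] using this
  exact Prod.ext h1 h2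

lemma sympForm_isRefl : (sympForm ι).IsRefl := fun v w h => by
  simpa [symp_comm w v] using h

/-- Any vector orthogonal to a Lagrangian (maximal isotropic) subspace lies in it. -/
lemma lagrangian_mem (L : Submodule (ZMod 2) ((ι → ZMod 2) × (ι → ZMod 2)))
    (hL : ∀ x ∈ L, ∀ y ∈ L, symp x y = 0)
    (hd : finrank (ZMod 2) L = Fintype.card ι)
    (v : (ι → ZMod 2) × (ι → ZMod 2)) (hv : ∀ y ∈ L, symp v y = 0) : v ∈ L := by
  have hle : L ≤ (sympForm ι).orthogonal L := fun x hx =>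
    (LinearMap.BilinForm.mem_orthogonal_iff).2 fun y hy => hL y hy x hx
  have hfr : finrank (ZMod 2) ((sympForm ι).orthogonal L) =
      finrank (ZMod 2) ((ι → ZMod 2) × (ι → ZMod 2)) - finrank (ZMod 2) L :=
    LinearMap.BilinForm.finrank_orthogonal sympForm_nondegenerate L
  have hV : finrank (ZMod 2) ((ι → ZMod 2) × (ι → ZMod 2)) = 2 * Fintype.card ι := by
    simp [Module.finrank_prod, Module.finrank_fintype_fun_eq_card]; ring
  have heq : (sympForm ι).orthogonal L = L := by
    refine (Submodule.eq_of_le_of_finrank_le hle ?_).symm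
    rw [hfr, hV, hd]; omega
  rw [← heq]
  exact (LinearMap.BilinForm.mem_orthogonal_iff).2 fun y hy => by
    rw [sympForm_apply, symp_comm]
    exact hv y hy

variable {κ : Type*} [Fintype κ] [DecidableEq κ]

lemma dotp_split (A : Finset κ) (x y : κ → ZMod 2) :
    dotp x y = dotp (fun j : {i // i ∉ A} => x j.val) (fun j => y j.val)
             + dotp (fun j : {i // i ∈ A} => x j.val) (fun j => y j.val) := by
  rw [dotp, ← Finset.sum_add_sum_compl A (fun j => x j * y j), dotp, dotp]
  rw [Finset.sum_subtype A (fun x => Iff.rfl) (fun j => x j * y j),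
    Finset.sum_subtype Aᶜ (fun x => Finset.mem_compl) (fun j => x j * y j)]
  ring

lemma symp_split (A : Finset κ) (v w : (κ → ZMod 2) × (κ → ZMod 2)) :
    symp v w = symp (fun j : {i // i ∉ A} => v.1 j.val, fun j => v.2 j.val)
                    (fun j : {i // i ∉ A} => w.1 j.val, fun j => w.2 j.val)
             + symp (fun j : {i // i ∈ A} => v.1 j.val, fun j => v.2 j.val)
                    (fun j : {i // i ∈ A} => w.1 j.val, fun j => w.2 j.val) := by
  simp only [symp, dotp_split A v.1 w.2, dotp_split A w.1 v.2]
  ring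

lemma sInf_eq_sInf_of (X Y : Set ℕ) (h1 : ∀ x ∈ X, ∃ y ∈ Y, y ≤ x)
    (h2 : ∀ y ∈ Y, ∃ x ∈ X, x ≤ y) : sInf X = sInf Y := by
  rcases X.eq_empty_or_nonempty with hX | hX
  · rcases Y.eq_empty_or_nonempty with hY | hY
    · rw [hX, hY]
    · obtain ⟨y, hy⟩ := hY
      obtain ⟨x, hx, -⟩ := h2 y hy
      rw [hX] at hx; exact absurd hx (Set.notMem_empty x)
  · obtain ⟨x0, hx0⟩ := hX
    obtain ⟨y0, hy0, -⟩ := h1 x0 hx0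
    apply le_antisymm
    · obtain ⟨x, hx, hle⟩ := h2 _ (Nat.sInf_mem ⟨y0, hy0⟩)
      exact le_trans (Nat.sInf_le hx) hle
    · obtain ⟨y, hy, hle⟩ := h1 _ (Nat.sInf_mem ⟨x0, hx0⟩)
      exact le_trans (Nat.sInf_le hy) hle

lemma pairWt_restrict_le (A : Finset κ) (v : (κ → ZMod 2) × (κ → ZMod 2)) :
    pairWt ((fun j : {i // i ∉ A} => v.1 j.val, fun j => v.2 j.val)) ≤ pairWt v := by
  apply Finset.card_le_card_of_injOn Subtype.val
  · intro j hj
    simp only [Finset.mem_coe, Finset.mem_filter, Finset.mem_univ, true_and] at hj ⊢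
    exact hj
  · exact Set.injOn_of_injective Subtype.val_injective

lemma pairWt_extend (A : Finset κ) (v : ({i // i ∉ A} → ZMod 2) × ({i // i ∉ A} → ZMod 2)) :
    pairWt ((fun j => if h : j ∉ A then v.1 ⟨j, h⟩ else 0,
             fun j => if h : j ∉ A then v.2 ⟨j, h⟩ else 0) :
             (κ → ZMod 2) × (κ → ZMod 2)) = pairWt v := by
  rw [pairWt, pairWt,
    ← Finset.card_map (Function.Embedding.subtype (fun i => i ∉ A))]
  congr 1
  ext j
  simp only [Finset.mem_map, Finset.mem_filter, Finset.mem_univ, true_and,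
    Function.Embedding.coe_subtype]
  constructor
  · intro hj
    by_cases h : j ∉ A
    · exact ⟨⟨j, h⟩, by simpa [h] using hj, rfl⟩
    · simp [h] at hj
  · rintro ⟨⟨j', hj'⟩, hne, rfl⟩
    simpa [hj'] using hne

end Aux

/-- **Proposition (removing a disentangled subsystem).**
Let `S` be a stabilizer code on `n` qubits with `k = n - dim S > 0` logical
qubits, and let `A` be a disentangled subset of `m` qubits, i.e. the subspace
`S_A = {s ∈ S : supp s ⊆ A}` (equivalently `S ⊓ ker P`, where `P` is the
coordinatewise restriction of pairs to the qubits outside `A`) has dimension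
`m = |A|`.  Then `P(S)` is an isotropic subspace of the Pauli space on the
remaining `n - m` qubits of dimension `dim S - m`, the restricted code has
the same number of logical qubits (`(n - m) - dim P(S) = n - dim S`), and it
has the same distance: the minimum weight of an element of
`P(S)^⊥ω \ P(S)` equals the minimum weight of an element of `S^⊥ω \ S`. -/
theorem remove_disentangled_subsystem (n m : ℕ)
    (S : Submodule (ZMod 2) ((Fin n → ZMod 2) × (Fin n → ZMod 2)))
    (hiso : ∀ s ∈ S, ∀ t ∈ S, symp s t = 0)
    (hk : Module.finrank (ZMod 2) S < n)
    (A : Finset (Fin n)) (hm : A.card = m)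
    (P : ((Fin n → ZMod 2) × (Fin n → ZMod 2)) →ₗ[ZMod 2]
        (({i : Fin n // i ∉ A} → ZMod 2) × ({i : Fin n // i ∉ A} → ZMod 2)))
    (hP : P = LinearMap.prodMap
      (LinearMap.funLeft (ZMod 2) (ZMod 2)
        (Subtype.val : {i : Fin n // i ∉ A} → Fin n))
      (LinearMap.funLeft (ZMod 2) (ZMod 2)
        (Subtype.val : {i : Fin n // i ∉ A} → Fin n)))
    (hdis : Module.finrank (ZMod 2) ↥(S ⊓ LinearMap.ker P) = m) :
    (∀ u ∈ S.map P, ∀ v ∈ S.map P, symp u v = 0) ∧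
    Module.finrank (ZMod 2) (S.map P) = Module.finrank (ZMod 2) S - m ∧
    (n - m) - Module.finrank (ZMod 2) (S.map P) =
      n - Module.finrank (ZMod 2) S ∧
    sInf (pairWt '' (sympDual (S.map P) \ ↑(S.map P))) =
      sInf (pairWt '' (sympDual S \ ↑S)) := by
  classical
  set Q : ((Fin n → ZMod 2) × (Fin n → ZMod 2)) →ₗ[ZMod 2]
      (({i : Fin n // i ∈ A} → ZMod 2) × ({i : Fin n // i ∈ A} → ZMod 2)) :=
    LinearMap.prodMap
      (LinearMap.funLeft (ZMod 2) (ZMod 2) (Subtype.val : {i : Fin n // i ∈ A} → Fin n))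
      (LinearMap.funLeft (ZMod 2) (ZMod 2) (Subtype.val : {i : Fin n // i ∈ A} → Fin n))
    with hQ
  have hPapp : ∀ x, P x = (fun j : {i : Fin n // i ∉ A} => x.1 j.val,
      fun j : {i : Fin n // i ∉ A} => x.2 j.val) := by
    subst hP; intro x; rfl
  have hQapp : ∀ x, Q x = (fun j : {i : Fin n // i ∈ A} => x.1 j.val,
      fun j : {i : Fin n // i ∈ A} => x.2 j.val) := fun x => rfl
  have hsplit : ∀ v w, symp v w = symp (P v) (P w) + symp (Q v) (Q w) := by
    intro v w
    rw [hPapp, hPapp, hQapp, hQapp]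
    exact symp_split A v w
  have hcard : Fintype.card {i : Fin n // i ∈ A} = m := by
    simpa [Fintype.card_subtype] using hm
  -- injectivity of Q on ker P
  have hinj : ∀ v ∈ LinearMap.ker P, Q v = 0 → v = 0 := by
    intro v hv hq
    rw [LinearMap.mem_ker, hPapp] at hv
    rw [hQapp] at hq
    have hv1 := congrArg Prod.fst hv
    have hv2 := congrArg Prod.snd hv
    have hq1 := congrArg Prod.fst hq
    have hq2 := congrArg Prod.snd hq
    refine Prod.ext (funext fun j => ?_) (funext fun j => ?_)
    · by_cases hj : j ∈ A
      · exact congrFun hq1 ⟨j, hj⟩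
      · exact congrFun hv1 ⟨j, hj⟩
    · by_cases hj : j ∈ A
      · exact congrFun hq2 ⟨j, hj⟩
      · exact congrFun hv2 ⟨j, hj⟩
  set L := Submodule.map Q (S ⊓ LinearMap.ker P) with hLdef
  have hLiso : ∀ x ∈ L, ∀ y ∈ L, symp x y = 0 := by
    rintro x hx y hy
    obtain ⟨u, hu, rfl⟩ := Submodule.mem_map.mp hx
    obtain ⟨u', hu', rfl⟩ := Submodule.mem_map.mp hy
    have h := hsplit u u'
    rw [hiso u hu.1 u' hu'.1, LinearMap.mem_ker.mp hu.2, symp_zero_left] at h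
    simpa using h.symm
  have hrankL : Module.finrank (ZMod 2) L = m := by
    have h := LinearMap.finrank_range_add_finrank_ker (Q.domRestrict (S ⊓ LinearMap.ker P))
    have hk0 : LinearMap.ker (Q.domRestrict (S ⊓ LinearMap.ker P)) = ⊥ := by
      rw [eq_bot_iff]
      rintro ⟨x, hx⟩ hker
      have : Q x = 0 := hker
      have : x = 0 := hinj x hx.2 this
      exact Submodule.mem_bot _ |>.mpr (Subtype.ext this)
    rw [LinearMap.range_domRestrict, hk0, finrank_bot, add_zero, hdis] at h
    exact h
  have hmapker : (LinearMap.ker (P.domRestrict S)).map S.subtype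
      = S ⊓ LinearMap.ker P := by
    ext x
    constructor
    · rintro ⟨⟨y, hyS⟩, hy0, rfl⟩
      exact ⟨hyS, hy0⟩
    · rintro ⟨hxS, hx0⟩
      exact ⟨⟨x, hxS⟩, hx0, rfl⟩
  have hrankSP : Module.finrank (ZMod 2) (S.map P) = Module.finrank (ZMod 2) S - m := by
    have h := LinearMap.finrank_range_add_finrank_ker (P.domRestrict S)
    rw [LinearMap.range_domRestrict] at h
    have hkk : Module.finrank (ZMod 2) (LinearMap.ker (P.domRestrict S)) = m := by
      rw [← Submodule.finrank_map_subtype_eq S (LinearMap.ker (P.domRestrict S)), hmapker, hdis]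
    rw [hkk] at h
    omega
  have hm_le : m ≤ Module.finrank (ZMod 2) S := by
    have h := LinearMap.finrank_range_add_finrank_ker (P.domRestrict S)
    rw [LinearMap.range_domRestrict] at h
    have hkk : Module.finrank (ZMod 2) (LinearMap.ker (P.domRestrict S)) = m := by
      rw [← Submodule.finrank_map_subtype_eq S (LinearMap.ker (P.domRestrict S)), hmapker, hdis]
    omega
  -- main membership lemma: anything commuting with S_A restricts into L on A
  have hQmem : ∀ w, (∀ u ∈ S ⊓ LinearMap.ker P, symp w u = 0) → Q w ∈ L := by
    intro w hw
    apply lagrangian_mem L hLiso (by rw [hrankL, hcard])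
    rintro y hy
    obtain ⟨u, hu, rfl⟩ := Submodule.mem_map.mp hy
    have h := hsplit w u
    rw [hw u hu, LinearMap.mem_ker.mp hu.2, symp_zero_right] at h
    simpa using h.symm
  have hQS : ∀ s ∈ S, Q s ∈ L := fun s hs => hQmem s (fun u hu => hiso s hs u hu.1)
  have hQdual : ∀ w ∈ sympDual S, Q w ∈ L := fun w hw => hQmem w (fun u hu => hw u hu.1)
  have part1 : ∀ u ∈ S.map P, ∀ v ∈ S.map P, symp u v = 0 := by
    intro u hu v hv
    obtain ⟨s, hs, rfl⟩ := Submodule.mem_map.mp hu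
    obtain ⟨t, ht, rfl⟩ := Submodule.mem_map.mp hv
    have h := hsplit s t
    rw [hiso s hs t ht, hLiso _ (hQS s hs) _ (hQS t ht), add_zero] at h
    exact h.symm
  refine ⟨part1, hrankSP, by omega, ?_⟩
  apply sInf_eq_sInf_of
  · -- lift elements from the restricted code
    rintro _ ⟨v, ⟨hvd, hvn⟩, rfl⟩
    set Ev : (Fin n → ZMod 2) × (Fin n → ZMod 2) :=
      (fun j => if h : j ∉ A then v.1 ⟨j, h⟩ else 0,
       fun j => if h : j ∉ A then v.2 ⟨j, h⟩ else 0) with hEv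
    have hPEv : P Ev = v := by
      rw [hPapp]
      exact Prod.ext (funext fun j => by simp [hEv, j.2]) (funext fun j => by simp [hEv, j.2])
    have hQEv : Q Ev = 0 := by
      rw [hQapp]
      refine Prod.ext (funext fun j => ?_) (funext fun j => ?_) <;> simp [hEv, j.2]
    have hEvd : Ev ∈ sympDual S := by
      intro s hs
      have h := hsplit Ev s
      rw [hPEv, hQEv, symp_zero_left, hvd (P s) (Submodule.mem_map_of_mem hs), add_zero] at h
      exact h
    have hEvn : Ev ∉ (S : Set _) := fun hEs => hvn ⟨Ev, hEs, hPEv⟩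
    exact ⟨pairWt Ev, ⟨Ev, ⟨hEvd, hEvn⟩, rfl⟩, le_of_eq (pairWt_extend A v)⟩
  · -- push elements down from the big code
    rintro _ ⟨w, ⟨hwd, hwn⟩, rfl⟩
    refine ⟨pairWt (P w), ⟨P w, ⟨?_, ?_⟩, rfl⟩, ?_⟩
    · intro u hu
      obtain ⟨s, hs, rfl⟩ := Submodule.mem_map.mp hu
      have h := hsplit w s
      rw [hwd s hs, hLiso _ (hQdual w hwd) _ (hQS s hs), add_zero] at h
      exact h.symm
    · intro hmem
      obtain ⟨s, hs, hPs⟩ := Submodule.mem_map.mp hmem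
      apply hwn
      have hd : P (w - s) = 0 := by rw [map_sub, hPs, sub_self]
      have hQd : Q (w - s) ∈ L := by
        rw [map_sub]; exact Submodule.sub_mem L (hQdual w hwd) (hQS s hs)
      obtain ⟨u, hu, hQu⟩ := Submodule.mem_map.mp hQd
      have h0 : w - s - u = 0 := by
        apply hinj
        · rw [LinearMap.mem_ker, map_sub, hd, LinearMap.mem_ker.mp hu.2, sub_zero]
        · rw [map_sub, hQu, sub_self]
      have hws : w - s = u := sub_eq_zero.mp h0
      have : w = u + s := by rw [← hws]; ring
      rw [this]
      exact S.add_mem hu.1 hs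
    · rw [hPapp]
      exact pairWt_restrict_le A w
end
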